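/- arXiv:2212.06101 — 2 statements merged into one kernel-verified Lean document; each statement's English description precedes it below -/
import Mathlib

section
/- For integers r ≥ 1 and n with n ≥ 3r/2, the star saturation number satisfies sat(n, K_{1,r}) = ⌈(r-1)n/2 - r²/8⌉. -/
open Filter Real
open scoped Classical

noncomputable def edgeCount {V : Type*} (G : SimpleGraph V) : ℕ := G.edgeSet.ncard

noncomputable def natDeg {V : Type*} (G : SimpleGraph V) (v : V) : ℕ := (G.neighborSet v).ncard

def addEdge {V : Type*} (G : SimpleGraph V) (u v : V) : SimpleGraph V :=
  G ⊔ SimpleGraph.fromEdgeSet {s(u, v)}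

def StarSatIn {V : Type*} (r : ℕ) (G H : SimpleGraph V) : Prop :=
  H ≤ G ∧ (∀ v, natDeg H v < r) ∧
  ∀ u v : V, G.Adj u v → ¬ H.Adj u v → ∃ w, r ≤ natDeg (addEdge H u v) w

noncomputable def starSat {V : Type*} (r : ℕ) (G : SimpleGraph V) : ℕ :=
  sInf { m | ∃ H : SimpleGraph V, StarSatIn r G H ∧ edgeCount H = m }

noncomputable def gnpProb (n : ℕ) (p : ℝ) (P : SimpleGraph (Fin n) → Prop) : ℝ :=
  ∑ G : SimpleGraph (Fin n),
    if P G then p ^ edgeCount G * (1 - p) ^ (n.choose 2 - edgeCount G) else 0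

noncomputable def x0 (p ε : ℝ) (n : ℕ) : ℕ :=
  (⌊2 * Real.logb (1/(1-p)) n - 2 * Real.logb (1/(1-p)) (Real.logb (1/(1-p)) n)
      + 2 * Real.logb (1/(1-p)) (Real.exp 1 / 2) + 1 + ε⌋).toNat

noncomputable def inducedEdges {n : ℕ} (G : SimpleGraph (Fin n)) (S : Finset (Fin n)) : ℕ :=
  {e | e ∈ G.edgeSet ∧ ∀ v ∈ e, v ∈ S}.ncard

def HasHamPower (ℓ : ℕ) {V : Type*} [Fintype V] (G : SimpleGraph V) : Prop :=
  ∃ σ : ZMod (Fintype.card V) ≃ V, ∀ i : ZMod (Fintype.card V), ∀ d : ℕ, 1 ≤ d → d ≤ ℓ →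
    G.Adj (σ i) (σ (i + (d : ZMod (Fintype.card V))))

def cyclePower (n ℓ : ℕ) : SimpleGraph (Fin n) where
  Adj i j := i ≠ j ∧ ∃ d : ℕ, 1 ≤ d ∧ d ≤ ℓ ∧ ((i.val + d) % n = j.val ∨ (j.val + d) % n = i.val)
  symm := ⟨fun i j ⟨h, d, h1, h2, h3⟩ => ⟨h.symm, d, h1, h2, h3.symm⟩⟩
  loopless := ⟨fun i h => h.1 rfl⟩

def antipodal (n : ℕ) : SimpleGraph (Fin n) where
  Adj i j := i ≠ j ∧ ((i.val + n/2) % n = j.val ∨ (j.val + n/2) % n = i.val)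
  symm := ⟨fun i j ⟨h, h2⟩ => ⟨h.symm, h2.symm⟩⟩
  loopless := ⟨fun i h => h.1 rfl⟩

/-!
Lower bound: in a `K_{1,r}`-saturated graph the vertices of degree `< r - 1` form a clique, since
adding an edge between two of them creates no vertex of degree `r`. If the clique has `σ` vertices,
twice the number of edges is at least `σ(σ - 1) + (n - σ)(r - 1) = (r - 1)n - r²/4 + (σ - r/2)²`.

Upper bound: a clique on `t` vertices next to an `(r - 1)`-regular graph (a circulant or the
complement of one) on the other `n - t ≥ r` vertices is saturated, and meets the lower bound with
`σ = t`. Taking `t = ⌊r/2⌋`, or `r/2 + 1` when parity forbids an `(r - 1)`-regular graph on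
`n - r/2` vertices, the excess `(t - r/2)²/2` is at most `1/2`, so the edge count is the ceiling.
-/

namespace SimpleGraph

variable {V W : Type*}

section AddEdge

variable (H : SimpleGraph V) {u v w : V}

lemma addEdge_comm (u v : V) : addEdge H u v = addEdge H v u := by
  rw [addEdge, addEdge, Sym2.eq_swap]

lemma natDeg_addEdge_of_ne (hu : w ≠ u) (hv : w ≠ v) :
    natDeg (addEdge H u v) w = natDeg H w := by
  unfold natDeg addEdge
  congr 1
  ext x
  simp only [mem_neighborSet, sup_adj, fromEdgeSet_adj, Set.mem_singleton_iff, Sym2.eq_iff]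
  tauto

lemma natDeg_addEdge_left [Finite V] (huv : u ≠ v) (h : ¬H.Adj u v) :
    natDeg (addEdge H u v) u = natDeg H u + 1 := by
  have hnbhd : (addEdge H u v).neighborSet u = insert v (H.neighborSet u) := by
    ext x
    simp only [addEdge, mem_neighborSet, sup_adj, fromEdgeSet_adj, Set.mem_singleton_iff,
      Sym2.eq_iff, Set.mem_insert_iff]
    constructor
    · rintro (hx | ⟨⟨-, rfl⟩ | ⟨rfl, -⟩, hne⟩) <;> tauto
    · rintro (rfl | hx) <;> tauto
  unfold natDeg
  rw [hnbhd, Set.ncard_insert_of_notMem (show v ∉ H.neighborSet u from h) (Set.toFinite _)]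

end AddEdge

/-- Adding a non-edge creates a star exactly when one of its endpoints has degree `r - 1`. -/
theorem starSatIn_top_iff [Finite V] {r : ℕ} {H : SimpleGraph V} :
    StarSatIn r ⊤ H ↔ (∀ v, natDeg H v < r) ∧
      ∀ u v, u ≠ v → natDeg H u + 1 < r → natDeg H v + 1 < r → H.Adj u v := by
  constructor
  · rintro ⟨-, hdeg, hsat⟩
    refine ⟨hdeg, fun u v huv hu hv => by_contra fun hadj => ?_⟩
    obtain ⟨w, hw⟩ := hsat u v huv hadj
    rcases eq_or_ne w u with rfl | hwu
    · rw [natDeg_addEdge_left H huv hadj] at hw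
      omega
    rcases eq_or_ne w v with rfl | hwv
    · rw [addEdge_comm, natDeg_addEdge_left H huv.symm (fun h => hadj h.symm)] at hw
      omega
    · rw [natDeg_addEdge_of_ne H hwu hwv] at hw
      exact (hdeg w).not_ge hw
  · rintro ⟨hdeg, hlow⟩
    refine ⟨le_top, hdeg, fun u v huv hadj => ?_⟩
    by_cases hu : natDeg H u + 1 < r
    · by_cases hv : natDeg H v + 1 < r
      · exact absurd (hlow u v huv hu hv) hadj
      · refine ⟨v, ?_⟩
        rw [addEdge_comm, natDeg_addEdge_left H huv.symm (fun h => hadj h.symm)]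
        omega
    · exact ⟨u, by rw [natDeg_addEdge_left H huv hadj]; omega⟩

lemma natDeg_eq_degree [Fintype V] (H : SimpleGraph V) (v : V) : natDeg H v = H.degree v := by
  rw [natDeg, ← card_neighborSet_eq_degree, Set.ncard_eq_toFinset_card', Set.toFinset_card]

lemma two_mul_edgeCount [Fintype V] (H : SimpleGraph V) : 2 * edgeCount H = ∑ v, natDeg H v := by
  simp only [natDeg_eq_degree, sum_degrees_eq_twice_card_edges, edgeCount,
    ← Set.ncard_coe_finset, coe_edgeFinset]

theorem four_mul_sub_sq_le_eight_mul_edgeCount [Fintype V] {r : ℕ} {H : SimpleGraph V}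
    (hH : StarSatIn r ⊤ H) :
    4 * ((r : ℤ) - 1) * Fintype.card V - r ^ 2 ≤ 8 * edgeCount H := by
  obtain ⟨-, hlow⟩ := starSatIn_top_iff.mp hH
  set S := Finset.univ.filter fun v => natDeg H v + 1 < r
  have hS : ∀ v ∈ S, (S.card : ℤ) - 1 ≤ natDeg H v := by
    intro v hv
    have hsub : (↑(S.erase v) : Set V) ⊆ H.neighborSet v := fun u hu => by
      obtain ⟨huv, hu⟩ := Finset.mem_erase.mp hu
      exact (hlow v u (Ne.symm huv) (Finset.mem_filter.mp hv).2 (Finset.mem_filter.mp hu).2)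
    have := Set.ncard_le_ncard hsub (Set.toFinite _)
    rw [Set.ncard_coe_finset, Finset.card_erase_of_mem hv] at this
    rw [natDeg]
    omega
  have hSc : ∀ v ∈ Sᶜ, (r : ℤ) - 1 ≤ natDeg H v := by
    intro v hv
    simp only [S, Finset.mem_compl, Finset.mem_filter, Finset.mem_univ, true_and, not_lt] at hv
    omega
  have hsum : (S.card : ℤ) * (S.card - 1) + (Fintype.card V - S.card) * (r - 1)
      ≤ 2 * edgeCount H := by
    have h₁ := Finset.card_nsmul_le_sum S _ _ hS
    have h₂ := Finset.card_nsmul_le_sum Sᶜ _ _ hSc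
    rw [Finset.card_compl, nsmul_eq_mul, Nat.cast_sub (Finset.card_le_univ S)] at h₂
    rw [nsmul_eq_mul] at h₁
    have hdeg := congrArg (Nat.cast : ℕ → ℤ) (two_mul_edgeCount H)
    push_cast at hdeg
    rw [hdeg, ← Finset.sum_add_sum_compl S]
    linarith
  -- `4σ(σ - 1) + 4(N - σ)(r - 1) = 4(r - 1)N - r² + (2σ - r)²` with `σ = |S|`, `N = |V|`
  nlinarith [sq_nonneg (2 * (S.card : ℤ) - r)]

lemma natDeg_comap_equiv (e : V ≃ W) (G : SimpleGraph W) (v : V) :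
    natDeg (G.comap e) v = natDeg G (e v) := by
  have hnbhd : (G.comap e).neighborSet v = e ⁻¹' G.neighborSet (e v) := rfl
  rw [natDeg, hnbhd, Set.ncard_preimage_of_injective_subset_range e.injective (by simp), natDeg]

lemma natDeg_sum_inl (G : SimpleGraph V) (H : SimpleGraph W) (v : V) :
    natDeg (G ⊕g H) (.inl v) = natDeg G v := by
  rw [natDeg, neighborSet_sum_inl, Set.ncard_image_of_injective _ Sum.inl_injective, natDeg]

lemma natDeg_sum_inr (G : SimpleGraph V) (H : SimpleGraph W) (w : W) :
    natDeg (G ⊕g H) (.inr w) = natDeg H w := by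
  rw [natDeg, neighborSet_sum_inr, Set.ncard_image_of_injective _ Sum.inr_injective, natDeg]

lemma natDeg_top [Fintype V] (v : V) : natDeg (⊤ : SimpleGraph V) v = Fintype.card V - 1 := by
  rw [natDeg_eq_degree]
  convert IsRegularOfDegree.top.degree_eq v

lemma natDeg_compl [Fintype V] (G : SimpleGraph V) (v : V) :
    natDeg Gᶜ v = Fintype.card V - 1 - natDeg G v := by
  rw [natDeg_eq_degree, natDeg_eq_degree, degree_compl]

section Circulant

variable {G : Type*} [AddCommGroup G] {s : Set G}

lemma neighborSet_circulantGraph (hs : -s = s) (h0 : (0 : G) ∉ s) (v : G) :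
    (circulantGraph s).neighborSet v = (v + ·) '' s := by
  ext w
  have hneg : v - w ∈ s ↔ w - v ∈ s := by rw [← neg_sub, ← Set.mem_neg, hs]
  simp only [mem_neighborSet, circulantGraph_adj, hneg, or_self, Set.image_add_left,
    Set.mem_preimage, neg_add_eq_sub]
  exact ⟨And.right, fun h => ⟨fun hvw => h0 (by simpa [hvw] using h), h⟩⟩

lemma natDeg_circulantGraph (hs : -s = s) (h0 : (0 : G) ∉ s) (v : G) :
    natDeg (circulantGraph s) v = s.ncard := by
  rw [natDeg, neighborSet_circulantGraph hs h0,
    Set.ncard_image_of_injective _ (add_right_injective v)]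

end Circulant

/-- The circulant graph on `ZMod m` with jumps `±1, …, ±j`. -/
lemma exists_natDeg_eq_two_mul {m j : ℕ} (hj : 2 * j < m) :
    ∃ R : SimpleGraph (ZMod m), ∀ v, natDeg R v = 2 * j := by
  set I := Finset.Icc (-(j : ℤ)) j
  set D : Set ℤ := ↑(I.erase 0)
  have hinj : Set.InjOn (Int.cast : ℤ → ZMod m) I := fun a ha b hb hab => by
    simp only [I, Finset.coe_Icc, Set.mem_Icc] at ha hb
    have hdvd := (ZMod.intCast_eq_intCast_iff_dvd_sub a b m).mp hab
    have := Int.eq_zero_of_abs_lt_dvd hdvd (by rw [abs_lt]; omega)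
    omega
  have hDI : D ⊆ I := fun d hd => Finset.mem_of_mem_erase hd
  have hsymm : -(Int.cast '' D : Set (ZMod m)) = Int.cast '' D := by
    have hDneg : ∀ d ∈ D, -d ∈ D := fun d hd => by
      simp only [D, I, Finset.coe_erase, Finset.coe_Icc, Set.mem_sdiff, Set.mem_Icc,
        Set.mem_singleton_iff] at hd ⊢
      omega
    ext x
    simp only [Set.mem_neg, Set.mem_image]
    constructor
    · rintro ⟨d, hd, hdx⟩
      exact ⟨-d, hDneg d hd, by rw [Int.cast_neg, hdx, neg_neg]⟩
    · rintro ⟨d, hd, rfl⟩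
      exact ⟨-d, hDneg d hd, Int.cast_neg d⟩
  have h0 : (0 : ZMod m) ∉ Int.cast '' D := by
    rintro ⟨d, hd, hd0⟩
    have := hinj (x₁ := d) (x₂ := 0) (hDI hd) (by simp [I]) (by simpa using hd0)
    exact (Finset.mem_erase.mp hd).1 this
  refine ⟨circulantGraph (Int.cast '' D), fun v => ?_⟩
  rw [natDeg_circulantGraph hsymm h0, (hinj.mono hDI).ncard_image, Set.ncard_coe_finset,
    Finset.card_erase_of_mem (by simp [I]), Int.card_Icc]
  omega

theorem exists_natDeg_eq {m k : ℕ} (hk : k < m) (hkm : Even (k * m)) :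
    ∃ R : SimpleGraph (ZMod m), ∀ v, natDeg R v = k := by
  rcases Nat.even_or_odd k with ⟨j, rfl⟩ | hodd
  · simpa [two_mul] using exists_natDeg_eq_two_mul (m := m) (j := j) (by omega)
  · -- `m` is even, and the complement of an `(m - 1 - k)`-regular circulant is `k`-regular
    have hm : Even m := (Nat.even_mul.mp hkm).resolve_left (Nat.not_even_iff_odd.mpr hodd)
    obtain ⟨j, hj⟩ := hm
    obtain ⟨i, hi⟩ := hodd
    have : NeZero m := ⟨by omega⟩
    obtain ⟨R, hR⟩ := exists_natDeg_eq_two_mul (m := m) (j := j - i - 1) (by omega)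
    refine ⟨Rᶜ, fun v => ?_⟩
    rw [natDeg_compl, hR, ZMod.card]
    omega

/-- A clique on `t` vertices next to an `(r - 1)`-regular graph on `m` vertices. -/
theorem exists_starSatIn_top [Fintype V] {r t m : ℕ} (hr : 1 ≤ r) (ht : t ≤ r) (hm : r ≤ m)
    (hpar : Even ((r - 1) * m)) (hV : Fintype.card V = t + m) :
    ∃ H : SimpleGraph V, StarSatIn r ⊤ H ∧ 2 * (edgeCount H : ℤ) = t * (t - 1) + m * (r - 1) := by
  obtain ⟨R, hR⟩ := exists_natDeg_eq (by omega : r - 1 < m) hpar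
  have : NeZero m := ⟨by omega⟩
  let e : V ≃ Fin t ⊕ ZMod m := Fintype.equivOfCardEq (by simp [hV, ZMod.card])
  let deg : Fin t ⊕ ZMod m → ℕ := Sum.elim (fun _ => t - 1) (fun _ => r - 1)
  set H := ((⊤ : SimpleGraph (Fin t)) ⊕g R).comap e
  have hdeg : ∀ x, natDeg H x = deg (e x) := fun x => by
    rw [natDeg_comap_equiv]
    rcases e x with a | b
    · rw [natDeg_sum_inl, natDeg_top, Fintype.card_fin]; rfl
    · rw [natDeg_sum_inr, hR]; rfl
  refine ⟨H, starSatIn_top_iff.mpr ⟨fun x => ?_, fun x y hxy hx hy => ?_⟩, ?_⟩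
  · rw [hdeg]
    rcases e x with a | b <;> simp only [deg, Sum.elim_inl, Sum.elim_inr] <;> omega
  · rw [hdeg] at hx hy
    change (⊤ ⊕g R).Adj (e x) (e y)
    rcases hex : e x with a | b <;> rcases hey : e y with a' | b' <;>
      simp only [hex, hey, deg, Sum.elim_inl, Sum.elim_inr] at hx hy <;> try omega
    rw [sum_adj_inl, top_adj]
    rintro rfl
    exact hxy (e.injective (hex.trans hey.symm))
  · have hsum : ∑ x, natDeg H x = t * (t - 1) + m * (r - 1) := by
      simp only [hdeg, e.sum_comp deg, Fintype.sum_sum_type, deg, Sum.elim_inl, Sum.elim_inr,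
        Finset.sum_const, Finset.card_univ, Fintype.card_fin, ZMod.card, smul_eq_mul]
    have := congrArg (Nat.cast : ℕ → ℤ) ((two_mul_edgeCount H).trans hsum)
    rcases Nat.eq_zero_or_pos t with rfl | ht0
    · push_cast [Nat.cast_sub hr] at this
      simpa using this
    · push_cast [Nat.cast_sub hr, Nat.cast_sub ht0] at this
      exact this

theorem exists_starSatIn_top_fin {n r : ℕ} (hr : 1 ≤ r) (hn : 3 * r ≤ 2 * n) :
    ∃ H : SimpleGraph (Fin n), StarSatIn r ⊤ H ∧
      8 * (edgeCount H : ℤ) < 4 * ((r : ℤ) - 1) * n - r ^ 2 + 8 := by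
  obtain ⟨t, ht, hm, hpar, hsq⟩ : ∃ t, t ≤ r ∧ r ≤ n - t ∧ Even ((r - 1) * (n - t)) ∧
      (2 * (t : ℤ) - r) ^ 2 < 8 := by
    -- `t = ⌊r/2⌋`, or `r/2 + 1` when `r` is even and `n - r/2` is odd;
    -- then `8e = 4(r - 1)n - r² + (2t - r)²`
    by_cases hpar : Even ((r - 1) * (n - r / 2))
    · refine ⟨r / 2, by omega, by omega, hpar, ?_⟩
      rcases (by omega : 2 * ((r / 2 : ℕ) : ℤ) - r = 0 ∨ 2 * ((r / 2 : ℕ) : ℤ) - r = -1)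
        with h | h <;> rw [h] <;> norm_num
    · simp only [Nat.even_mul, not_or, Nat.not_even_iff_odd, Nat.odd_iff] at hpar
      refine ⟨r / 2 + 1, by omega, by omega, Nat.even_mul.mpr (Or.inr (Nat.even_iff.mpr ?_)), ?_⟩
      · omega
      · rw [(by omega : 2 * ((r / 2 + 1 : ℕ) : ℤ) - r = 2)]
        norm_num
  obtain ⟨H, hH, hcount⟩ :=
    exists_starSatIn_top (V := Fin n) hr ht hm hpar (by rw [Fintype.card_fin]; omega)
  refine ⟨H, hH, ?_⟩
  rw [Nat.cast_sub (by omega : t ≤ n)] at hcount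
  nlinarith

end SimpleGraph

open SimpleGraph

lemma starSat_eq_of_forall_le {V : Type*} {r : ℕ} {G H₀ : SimpleGraph V} (h₀ : StarSatIn r G H₀)
    (hmin : ∀ H, StarSatIn r G H → edgeCount H₀ ≤ edgeCount H) : starSat r G = edgeCount H₀ :=
  le_antisymm (Nat.sInf_le ⟨H₀, h₀, rfl⟩)
    (le_csInf ⟨_, H₀, h₀, rfl⟩ (by rintro _ ⟨H, hH, rfl⟩; exact hmin H hH))

lemma ceil_div_eight_eq {L e : ℤ} (h₁ : L ≤ 8 * e) (h₂ : 8 * e < L + 8) : ⌈(L : ℝ) / 8⌉ = e := by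
  rw [Int.ceil_eq_iff]
  constructor
  · rw [lt_div_iff₀ (by norm_num)]; exact_mod_cast (by linarith : (e - 1) * 8 < L)
  · rw [div_le_iff₀ (by norm_num)]; exact_mod_cast (by linarith : L ≤ e * 8)

theorem stmt1 (n r : ℕ) (hr : 1 ≤ r) (hn : 3 * r ≤ 2 * n) :
    (starSat r (⊤ : SimpleGraph (Fin n)) : ℤ)
      = ⌈((r : ℝ) - 1) * (n : ℝ) / 2 - (r : ℝ) ^ 2 / 8⌉ := by
  obtain ⟨H₀, hH₀, hupper⟩ := exists_starSatIn_top_fin hr hn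
  have hlower : ∀ H : SimpleGraph (Fin n), StarSatIn r ⊤ H →
      4 * ((r : ℤ) - 1) * n - r ^ 2 ≤ 8 * edgeCount H := fun H hH => by
    simpa using four_mul_sub_sq_le_eight_mul_edgeCount hH
  have hmin : ∀ H, StarSatIn r ⊤ H → edgeCount H₀ ≤ edgeCount H := fun H hH => by
    have := hlower H hH
    omega
  rw [starSat_eq_of_forall_le hH₀ hmin, ← ceil_div_eight_eq (hlower H₀ hH₀) hupper]
  congr 1
  push_cast
  ring
end

section
/- Fix 0 < p < 1, r ≥ 3, μ ≥ 0, and ε > 0. Let b = 1/(1-p), x₀ = ⌊2 log_b n − 2 log_b log_b n + 2 log_b(e/2) + 1 + ε⌋, and x₁ = x₀ + 1. Then the expected number of vertex subsets of G(n,p) of size x₁ inducing fewer than μ + (r-1)/2 edges, namely C(n, x₁) · Σ_{m < μ + (r-1)/2} C(C(x₁,2), m) p^m (1-p)^(C(x₁,2)-m), tends to 0 as n → ∞. -/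
/-!
Write `b = 1/(1-p)`, `L = log_b n`, `x = x₀ + 1` and `M = μ + r`. Since `C(n,x) ≤ (en/x)^x` and
each of the fewer than `M` terms of the lower-tail sum is at most `(C(x,2)+1)^M (1-p)^(C(x,2)-M)`,
the expectation is at most `M b^M x^(2M) B^x` with `B = (en/x) · b^(-(x-1)/2)`. The choice of `x₀`
makes `b^(-(x-1)/2)` at most `(2L/(en)) · b^(-ε/2)`, so `B ≤ (2L/x) · b^(-ε/2)`, and since
`x ≥ 2L - 2 log_b L` with `log_b L = o(L)`, eventually `B ≤ b^(-ε/4) < 1`. As `x → ∞`,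
`x^(2M) B^x → 0`.
-/

open Filter Real
open scoped Classical

open Finset

noncomputable def x0Real (b ε : ℝ) (n : ℕ) : ℝ :=
  2 * logb b n - 2 * logb b (logb b n) + 2 * logb b (exp 1 / 2) + 1 + ε

lemma x0Real_lt_x0_add_one (p ε : ℝ) (n : ℕ) : x0Real (1 / (1 - p)) ε n < x0 p ε n + 1 := by
  have hfloor := Int.lt_floor_add_one (x0Real (1 / (1 - p)) ε n)
  have htoNat : ((⌊x0Real (1 / (1 - p)) ε n⌋ : ℤ) : ℝ) ≤ (⌊x0Real (1 / (1 - p)) ε n⌋.toNat : ℕ) :=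
    mod_cast Int.self_le_toNat _
  unfold x0Real at *
  unfold x0
  linarith

lemma Nat.cast_choose_le_exp_mul_div_pow (n k : ℕ) :
    (n.choose k : ℝ) ≤ (n * exp 1 / k) ^ k := by
  rcases Nat.eq_zero_or_pos k with rfl | hk
  · simp
  have hk' : (k : ℝ) ≠ 0 := by positivity
  calc (n.choose k : ℝ) ≤ (n : ℝ) ^ k / k.factorial := Nat.choose_le_pow_div k n
    _ = (n / k : ℝ) ^ k * ((k : ℝ) ^ k / k.factorial) := by
      rw [mul_div_assoc', ← mul_pow, div_mul_cancel₀ _ hk']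
    _ ≤ (n / k : ℝ) ^ k * exp 1 ^ k := by
      gcongr
      rw [exp_one_pow]
      exact Real.pow_div_factorial_le_exp _ (Nat.cast_nonneg k) k
    _ = (n * exp 1 / k) ^ k := by rw [← mul_pow, div_mul_eq_mul_div]

lemma choose_mul_pow_choose_two_le (n k : ℕ) {q : ℝ} (hq : 0 ≤ q) :
    (n.choose k : ℝ) * q ^ k.choose 2 ≤ (n * exp 1 / k * q ^ (((k : ℝ) - 1) / 2)) ^ k := by
  have hsplit : q ^ k.choose 2 = (q ^ (((k : ℝ) - 1) / 2)) ^ k := by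
    rw [← rpow_natCast _ k, ← rpow_mul hq, ← rpow_natCast, Nat.cast_choose_two]
    ring_nf
  rw [hsplit, mul_pow]
  gcongr
  exact Nat.cast_choose_le_exp_mul_div_pow n k

lemma sum_range_choose_mul_pow_le {p : ℝ} (hp0 : 0 ≤ p) (hp1 : p < 1) (N M : ℕ) :
    ∑ m ∈ range M, (N.choose m : ℝ) * p ^ m * (1 - p) ^ (N - m)
      ≤ M * ((N + 1) ^ M * (1 - p) ^ N / (1 - p) ^ M) := by
  have hq : 0 < 1 - p := by linarith
  have hterm : ∀ m ∈ range M, (N.choose m : ℝ) * p ^ m * (1 - p) ^ (N - m)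
      ≤ (N + 1) ^ M * (1 - p) ^ N / (1 - p) ^ M := by
    intro m hm
    have hmM : m ≤ M := (mem_range.1 hm).le
    rcases lt_or_ge N m with hNm | hmN
    · rw [Nat.choose_eq_zero_of_lt hNm]
      simp only [Nat.cast_zero, zero_mul]
      positivity
    have hchoose : (N.choose m : ℝ) ≤ (N + 1) ^ M :=
      calc (N.choose m : ℝ) ≤ (N : ℝ) ^ m := mod_cast Nat.choose_le_pow N m
        _ ≤ (N + 1) ^ m := by gcongr; linarith
        _ ≤ (N + 1) ^ M := pow_le_pow_right₀ (by linarith [N.cast_nonneg (α := ℝ)]) hmM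
    have hpow : (1 - p) ^ (N - m) ≤ (1 - p) ^ N / (1 - p) ^ M := by
      rw [pow_sub₀ _ hq.ne' hmN, div_eq_mul_inv]
      exact mul_le_mul_of_nonneg_left
        (inv_anti₀ (by positivity) (pow_le_pow_of_le_one hq.le (by linarith) hmM)) (by positivity)
    calc (N.choose m : ℝ) * p ^ m * (1 - p) ^ (N - m)
        ≤ (N + 1) ^ M * 1 * ((1 - p) ^ N / (1 - p) ^ M) := by
          gcongr
          exact pow_le_one₀ hp0 hp1.le
      _ = (N + 1) ^ M * (1 - p) ^ N / (1 - p) ^ M := by ring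
  simpa using sum_le_card_nsmul _ _ _ hterm

lemma choose_mul_sum_range_le {p : ℝ} (hp0 : 0 ≤ p) (hp1 : p < 1) (n M : ℕ) {k : ℕ}
    (hk : 1 ≤ k) :
    (n.choose k : ℝ) * ∑ m ∈ range M,
        ((k.choose 2).choose m : ℝ) * p ^ m * (1 - p) ^ (k.choose 2 - m)
      ≤ M / (1 - p) ^ M * ((k : ℝ) ^ (2 * M)
          * (n * exp 1 / k * (1 - p) ^ (((k : ℝ) - 1) / 2)) ^ k) := by
  have hq : 0 < 1 - p := by linarith
  have hchoose_two : (k.choose 2 : ℝ) + 1 ≤ (k : ℝ) ^ 2 :=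
    mod_cast Nat.choose_lt_pow (by omega) le_rfl
  calc (n.choose k : ℝ) * ∑ m ∈ range M,
        ((k.choose 2).choose m : ℝ) * p ^ m * (1 - p) ^ (k.choose 2 - m)
      ≤ n.choose k * (M * ((k.choose 2 + 1) ^ M * (1 - p) ^ k.choose 2 / (1 - p) ^ M)) := by
        gcongr
        exact sum_range_choose_mul_pow_le hp0 hp1 _ M
    _ = M / (1 - p) ^ M * ((k.choose 2 + 1) ^ M * (n.choose k * (1 - p) ^ k.choose 2)) := by
        ring
    _ ≤ M / (1 - p) ^ M * (((k : ℝ) ^ 2) ^ M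
          * (n * exp 1 / k * (1 - p) ^ (((k : ℝ) - 1) / 2)) ^ k) := by
        gcongr
        exact choose_mul_pow_choose_two_le n k hq.le
    _ = M / (1 - p) ^ M * ((k : ℝ) ^ (2 * M)
          * (n * exp 1 / k * (1 - p) ^ (((k : ℝ) - 1) / 2)) ^ k) := by
        rw [pow_mul]

lemma eventually_logb_logb_le {b κ : ℝ} (hb : 1 < b) (hκ : 0 < κ) :
    ∀ᶠ n : ℕ in atTop, logb b (logb b n) ≤ κ * logb b n := by
  have hL := (tendsto_logb_atTop hb).comp tendsto_natCast_atTop_atTop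
  filter_upwards [hL.eventually ((isLittleO_logb_id_atTop (b := b)).bound hκ),
    hL.eventually (eventually_ge_atTop 0)] with n hlittle hnonneg
  simp only [Function.comp_apply, norm_eq_abs, id] at hlittle hnonneg
  rw [abs_of_nonneg hnonneg] at hlittle
  exact (le_abs_self _).trans hlittle

lemma eventually_mul_logb_le_x0Real {b ε θ : ℝ} (hb : 1 < b) (hε : 0 ≤ ε) (hθ : θ < 1) :
    ∀ᶠ n : ℕ in atTop, 2 * θ * logb b n ≤ x0Real b ε n := by
  have hc : 0 < logb b (exp 1 / 2) := logb_pos hb (by linarith [exp_one_gt_d9])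
  filter_upwards [eventually_logb_logb_le hb (sub_pos.2 hθ)] with n hn
  unfold x0Real
  linarith

lemma tendsto_x0Real_atTop {b ε : ℝ} (hb : 1 < b) (hε : 0 ≤ ε) :
    Tendsto (x0Real b ε) atTop atTop := by
  refine tendsto_atTop_mono' _ ?_ ((tendsto_logb_atTop hb).comp tendsto_natCast_atTop_atTop)
  filter_upwards [eventually_mul_logb_le_x0Real hb hε (θ := 1 / 2) (by norm_num)] with n hn
  simpa using hn

lemma eventually_mul_exp_div_mul_rpow_le {b ε : ℝ} (hb : 1 < b) (hε : 0 < ε) :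
    ∀ᶠ n : ℕ in atTop, ∀ x : ℝ, x0Real b ε n ≤ x →
      n * exp 1 / x * b⁻¹ ^ ((x - 1) / 2) ≤ b ^ (-(ε / 4)) := by
  have hb0 : 0 < b := by linarith
  set θ : ℝ := b ^ (-(ε / 4)) with hθ
  have hθ0 : 0 < θ := rpow_pos_of_pos hb0 _
  have hθ1 : θ < 1 := rpow_lt_one_of_one_lt_of_neg hb (by linarith)
  have hL := (tendsto_logb_atTop hb).comp tendsto_natCast_atTop_atTop
  filter_upwards [eventually_mul_logb_le_x0Real hb hε.le hθ1,
    hL.eventually (eventually_ge_atTop 1), eventually_ge_atTop 1]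
    with n hy hL1 hn1 x hx
  simp only [Function.comp_apply] at hL1
  set L := logb b n
  have hn0 : (0 : ℝ) < n := mod_cast hn1
  have hx0 : 0 < x := by nlinarith
  have hrpow : b⁻¹ ^ ((x - 1) / 2) ≤ b⁻¹ ^ ((x0Real b ε n - 1) / 2) :=
    rpow_le_rpow_of_exponent_ge (inv_pos.2 hb0) (inv_le_one_of_one_le₀ hb.le) (by linarith)
  have hval : b⁻¹ ^ ((x0Real b ε n - 1) / 2) = L / n * (2 / exp 1) * b ^ (-(ε / 2)) := by
    have hexp : -((x0Real b ε n - 1) / 2) = logb b L - L - logb b (exp 1 / 2) - ε / 2 := by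
      unfold x0Real; ring
    rw [inv_rpow hb0.le, ← rpow_neg hb0.le, hexp, rpow_sub hb0, rpow_sub hb0, rpow_sub hb0,
      rpow_logb hb0 hb.ne' (by linarith), rpow_logb hb0 hb.ne' hn0,
      rpow_logb hb0 hb.ne' (by positivity), rpow_neg hb0.le]
    ring
  calc n * exp 1 / x * b⁻¹ ^ ((x - 1) / 2)
      ≤ n * exp 1 / x * (L / n * (2 / exp 1) * b ^ (-(ε / 2))) := by
        rw [← hval]; gcongr
    _ = 2 * L / x * b ^ (-(ε / 2)) := by field_simp
    _ ≤ θ⁻¹ * b ^ (-(ε / 2)) := by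
        gcongr
        rw [div_le_iff₀ hx0, ← div_eq_inv_mul, le_div_iff₀ hθ0]
        linarith
    _ = θ := by
        rw [hθ, ← rpow_neg hb0.le, ← rpow_add hb0]
        ring_nf

theorem stmt6_general (p : ℝ) (hp : 0 < p) (hp1 : p < 1) (r μ : ℕ)
    (ε : ℝ) (hε : 0 < ε) :
    Tendsto (fun n : ℕ =>
        (n.choose (x0 p ε n + 1) : ℝ) *
          ∑ m ∈ (Finset.range (μ + r)).filter
              (fun m : ℕ => (m : ℝ) < (μ : ℝ) + ((r : ℝ) - 1) / 2),
            (((x0 p ε n + 1).choose 2).choose m : ℝ) * p ^ m *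
              (1 - p) ^ ((x0 p ε n + 1).choose 2 - m))
      atTop (nhds 0) := by
  set b : ℝ := 1 / (1 - p) with hb_def
  have hb : 1 < b := one_lt_one_div (by linarith) (by linarith)
  have hq : 1 - p = b⁻¹ := by rw [hb_def, one_div, inv_inv]
  have hterm (N m : ℕ) : 0 ≤ (N.choose m : ℝ) * p ^ m * (1 - p) ^ (N - m) := by
    have : 0 ≤ 1 - p := by linarith
    positivity
  set M := μ + r
  set θ : ℝ := b ^ (-(ε / 4))
  have hθ : |θ| < 1 := by
    rw [abs_of_pos (rpow_pos_of_pos (by linarith) _)]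
    exact rpow_lt_one_of_one_lt_of_neg hb (by linarith)
  have hX : Tendsto (fun n => x0 p ε n + 1) atTop atTop := by
    rw [← tendsto_natCast_atTop_iff (R := ℝ)]
    refine tendsto_atTop_mono (fun n => ?_) (tendsto_x0Real_atTop hb hε.le)
    exact_mod_cast (x0Real_lt_x0_add_one p ε n).le
  have hdecay := ((tendsto_pow_const_mul_const_pow_of_abs_lt_one (2 * M) hθ).comp hX).const_mul
    ((M : ℝ) / (1 - p) ^ M)
  rw [mul_zero] at hdecay
  refine squeeze_zero' (Eventually.of_forall fun n =>
    mul_nonneg (Nat.cast_nonneg _) (sum_nonneg fun m _ => hterm _ m)) ?_ hdecay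
  filter_upwards [eventually_mul_exp_div_mul_rpow_le hb hε] with n hn
  set k := x0 p ε n + 1
  calc _ ≤ (n.choose k : ℝ) * ∑ m ∈ range M,
        ((k.choose 2).choose m : ℝ) * p ^ m * (1 - p) ^ (k.choose 2 - m) := by
        gcongr
        exact filter_subset _ _
    _ ≤ M / (1 - p) ^ M * ((k : ℝ) ^ (2 * M)
          * (n * exp 1 / k * (1 - p) ^ (((k : ℝ) - 1) / 2)) ^ k) :=
        choose_mul_sum_range_le hp.le hp1 n M (by omega)
    _ ≤ M / (1 - p) ^ M * ((k : ℝ) ^ (2 * M) * θ ^ k) := by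
        rw [hq]
        gcongr
        exact hn k (mod_cast (x0Real_lt_x0_add_one p ε n).le)

theorem stmt6 (p : ℝ) (hp : 0 < p) (hp1 : p < 1) (r μ : ℕ) (hr : 3 ≤ r)
    (ε : ℝ) (hε : 0 < ε) :
    Tendsto (fun n : ℕ =>
        (n.choose (x0 p ε n + 1) : ℝ) *
          ∑ m ∈ (Finset.range (μ + r)).filter
              (fun m : ℕ => (m : ℝ) < (μ : ℝ) + ((r : ℝ) - 1) / 2),
            (((x0 p ε n + 1).choose 2).choose m : ℝ) * p ^ m *
              (1 - p) ^ ((x0 p ε n + 1).choose 2 - m))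
      atTop (nhds 0) :=
  stmt6_general p hp hp1 r μ ε hε
end
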